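/- If (J,S) is a K₃-trap, then J is isomorphic to K₃ and |S| ≤ 1. -/

import Mathlib

open Classical SimpleGraph

/-- A class of (simple) graphs: a predicate on graphs over every vertex type. -/
abbrev GraphClass : Type 1 := ∀ (V : Type), SimpleGraph V → Prop

/-- `C` is closed under isomorphism. -/
def ClosedUnderIso (C : GraphClass) : Prop :=
  ∀ {V W : Type} (G : SimpleGraph V) (H : SimpleGraph W), Nonempty (G ≃g H) → C V G → C W H

/-- `C` is closed under taking subgraphs. -/
def ClosedUnderSubgraphs (C : GraphClass) : Prop :=
  ∀ {V : Type} (G : SimpleGraph V) (H : G.Subgraph), C V G → C ↥H.verts H.coe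

/-- `C` is closed under taking disjoint unions. -/
def ClosedUnderDisjointUnion (C : GraphClass) : Prop :=
  ∀ {V W : Type} (G : SimpleGraph V) (H : SimpleGraph W),
    C V G → C W H → C (V ⊕ W) (G.sum H)

/-- The edit distance from `G` to the (monotone) class `C`: the minimum number of
edges one needs to delete from `G` to obtain a graph in `C` (`⊤` if impossible). -/
noncomputable def editDist (C : GraphClass) {V : Type} (G : SimpleGraph V) : ℕ∞ :=
  sInf {n : ℕ∞ | ∃ F : Set (Sym2 V), F ⊆ G.edgeSet ∧ C V (G.deleteEdges F) ∧ (F.ncard : ℕ∞) = n}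

/-- The set of edges of `G` whose two ends receive distinct labels under `f`. -/
def crossEdges {V : Type} (G : SimpleGraph V) (f : V → ℕ) : Set (Sym2 V) :=
  {e | e ∈ G.edgeSet ∧ ∃ u v : V, e = s(u, v) ∧ f u ≠ f v}

/-- The `C`-edge-brittleness of `G`: the minimum, over partitions of `V(G)`
(given as labellings `f : V → ℕ`) all of whose parts induce subgraphs in `C`,
of the number of edges with ends in distinct parts. -/
noncomputable def edgeBrittleness (C : GraphClass) {V : Type} (G : SimpleGraph V) : ℕ∞ :=
  sInf {n : ℕ∞ | ∃ f : V → ℕ,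
    (∀ i : ℕ, C ↥(f ⁻¹' {i}) (G.induce (f ⁻¹' {i}))) ∧ ((crossEdges G f).ncard : ℕ∞) = n}

/-- Given a labelling `g` of the edges of `G`, the set of vertices incident with
edges in two distinct parts. -/
def brittleVertices {V : Type} (G : SimpleGraph V) (g : Sym2 V → ℕ) : Set V :=
  {v | ∃ e₁ e₂ : Sym2 V, e₁ ∈ G.edgeSet ∧ e₂ ∈ G.edgeSet ∧ v ∈ e₁ ∧ v ∈ e₂ ∧ g e₁ ≠ g e₂}

/-- The vertices incident with an edge of `G` in part `i` of the edge labelling `g`. -/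
def partSupport {V : Type} (G : SimpleGraph V) (g : Sym2 V → ℕ) (i : ℕ) : Set V :=
  {v | ∃ e ∈ G.edgeSet, g e = i ∧ v ∈ e}

/-- The subgraph of `G` induced by the edges in part `i` of the edge labelling `g`
(on its own vertex set: the vertices incident with those edges). -/
def partGraph {V : Type} (G : SimpleGraph V) (g : Sym2 V → ℕ) (i : ℕ) :
    SimpleGraph ↥(partSupport G g i) :=
  (SimpleGraph.fromEdgeSet {e | e ∈ G.edgeSet ∧ g e = i}).induce (partSupport G g i)

/-- The `C`-vertex-brittleness of `G`: the minimum, over partitions of `E(G)`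
(given as labellings `g : Sym2 V → ℕ`) all of whose parts induce subgraphs in `C`,
of the number of vertices incident with edges in distinct parts. -/
noncomputable def vertexBrittleness (C : GraphClass) {V : Type} (G : SimpleGraph V) : ℕ∞ :=
  sInf {n : ℕ∞ | ∃ g : Sym2 V → ℕ,
    (∀ i : ℕ, C ↥(partSupport G g i) (partGraph G g i)) ∧ ((brittleVertices G g).ncard : ℕ∞) = n}

/-- The `C̄`-capacity of `G`: the maximum number of pairwise edge-disjoint subgraphs
of `G`, none of which belongs to `C`. -/
noncomputable def capacity (C : GraphClass) {V : Type} (G : SimpleGraph V) : ℕ∞ :=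
  sSup {n : ℕ∞ | ∃ m : ℕ, (m : ℕ∞) = n ∧ ∃ H : Fin m → G.Subgraph,
    (∀ i j, i ≠ j → Disjoint (H i).edgeSet (H j).edgeSet) ∧
    (∀ i, ¬ C ↥(H i).verts (H i).coe)}

/-- The graph obtained from `G` by subdividing the edge `uv` once, using a new vertex. -/
def subdivideEdge {V : Type} (G : SimpleGraph V) (u v : V) : SimpleGraph (V ⊕ Unit) :=
  SimpleGraph.fromRel fun x y =>
    (∃ a b : V, x = Sum.inl a ∧ y = Sum.inl b ∧ G.Adj a b ∧ s(a, b) ≠ s(u, v)) ∨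
    (∃ a : V, x = Sum.inl a ∧ y = Sum.inr () ∧ (a = u ∨ a = v))

/-- A graph bundled with its vertex type. -/
def FGraph : Type 1 := Σ V : Type, SimpleGraph V

/-- `IsSubdivision G H` means `H` is (isomorphic to) a subdivision of `G`. -/
inductive IsSubdivision : FGraph → FGraph → Prop
  | of_iso {V W : Type} (G : SimpleGraph V) (H : SimpleGraph W) :
      Nonempty (G ≃g H) → IsSubdivision ⟨V, G⟩ ⟨W, H⟩
  | step {V : Type} (G : SimpleGraph V) {u v : V} (h : G.Adj u v) (H : FGraph) :
      IsSubdivision ⟨V ⊕ Unit, subdivideEdge G u v⟩ H → IsSubdivision ⟨V, G⟩ H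

/-- `H` is a topological minor of `G`: some subgraph of `G` is isomorphic to a
subdivision of `H`. -/
def IsTopMinor {W V : Type} (H : SimpleGraph W) (G : SimpleGraph V) : Prop :=
  ∃ S : G.Subgraph, IsSubdivision ⟨W, H⟩ ⟨↥S.verts, S.coe⟩

/-- An ideal: a class of graphs closed under isomorphism and topological minors. -/
def IsIdeal (C : GraphClass) : Prop :=
  ClosedUnderIso C ∧
  ∀ {V W : Type} (G : SimpleGraph V) (H : SimpleGraph W), IsTopMinor H G → C V G → C W H

/-- The image of vertex `v` in the `i`-th copy of `G` inside `Fan(G,S,k)`. -/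
noncomputable def fanMap {V : Type} (S : Set V) (k : ℕ) (i : Fin k) (v : V) :
    ↥S ⊕ (↥(Sᶜ : Set V) × Fin k) :=
  if h : v ∈ S then Sum.inl ⟨v, h⟩ else Sum.inr (⟨v, h⟩, i)

/-- `Fan G S k`: the graph obtained from `k` vertex-disjoint copies of `G` by
identifying, for each `v ∈ S`, all copies of `v` (and the copies of each edge of `G[S]`). -/
noncomputable def Fan {V : Type} (G : SimpleGraph V) (S : Set V) (k : ℕ) :
    SimpleGraph (↥S ⊕ (↥(Sᶜ : Set V) × Fin k)) :=
  SimpleGraph.fromRel fun x y =>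
    ∃ (i : Fin k) (a b : V), G.Adj a b ∧ x = fanMap S k i a ∧ y = fanMap S k i b

/-- The triangle `K₃`. -/
def K3 : SimpleGraph (Fin 3) := ⊤

/-- The complete graph `K₄`. -/
def K4 : SimpleGraph (Fin 4) := ⊤

/-- The complete bipartite graph `K_{2,n}`. -/
def K2n (n : ℕ) : SimpleGraph (Fin 2 ⊕ Fin n) := completeBipartiteGraph (Fin 2) (Fin n)

/-- The complete bipartite graph `K_{2,3}`. -/
def K23 : SimpleGraph (Fin 2 ⊕ Fin 3) := completeBipartiteGraph (Fin 2) (Fin 3)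

/-- The diamond `D = K₄ ∖ e`. -/
def Diamond : SimpleGraph (Fin 4) := (⊤ : SimpleGraph (Fin 4)).deleteEdges {s((0 : Fin 4), 1)}

/-- `K⁺_{2,3}`: `K_{2,3}` together with an edge joining the two degree-3 vertices. -/
def K23plus : SimpleGraph (Fin 2 ⊕ Fin 3) :=
  K23 ⊔ SimpleGraph.fromEdgeSet {s(Sum.inl 0, Sum.inl 1)}

/-- `W⁺_k`: the cycle on `2k` vertices together with a hub adjacent to the `k`
vertices in even position (the wheel with all rim edges subdivided). -/
def Wplus (k : ℕ) : SimpleGraph (Option (ZMod (2 * k))) :=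
  SimpleGraph.fromRel fun x y =>
    (∃ a : ZMod (2 * k), x = some a ∧ y = some (a + 1)) ∨
    (∃ a : ZMod (2 * k), x = none ∧ y = some a ∧ a.val % 2 = 0)

/-- An `H`-snare: a pair `(J,S)` with `H` a topological minor of `J`, `S` independent
in `J`, and `J ∖ S` connected. -/
def IsSnare {W V : Type} (H : SimpleGraph W) (J : SimpleGraph V) (S : Set V) : Prop :=
  IsTopMinor H J ∧ (∀ a ∈ S, ∀ b ∈ S, ¬ J.Adj a b) ∧ (J.induce Sᶜ).Connected

/-- Suppressing the vertex `v` in `J`: delete `v`, joining its (at most two) neighbours;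
for a degree 2 vertex `v` this is the contraction `J/v` of an edge incident with `v`. -/
def suppress {V : Type} (J : SimpleGraph V) (v : V) : SimpleGraph ↥({v}ᶜ : Set V) :=
  SimpleGraph.fromRel fun x y => J.Adj ↑x ↑y ∨ (J.Adj ↑x v ∧ J.Adj v ↑y)

/-- An `H`-trap: a minimal `H`-snare. -/
def IsTrap {W V : Type} (H : SimpleGraph W) (J : SimpleGraph V) (S : Set V) : Prop :=
  IsSnare H J S ∧
  (∀ J' : J.Subgraph, J' ≠ ⊤ → ¬ IsSnare H J'.coe {x : ↥J'.verts | ↑x ∈ S}) ∧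
  (∀ v : V, v ∉ S → (J.neighborSet v).ncard = 2 →
    ¬ IsSnare H (suppress J v) {x : ↥({v}ᶜ : Set V) | ↑x ∈ S})

/-- `G` has a tree-decomposition of width at most `w`. -/
def HasTreewidthLE {V : Type} (G : SimpleGraph V) (w : ℕ) : Prop :=
  ∃ (ι : Type) (_ : Fintype ι) (T : SimpleGraph ι) (β : ι → Set V),
    T.IsTree ∧
    (∀ u v : V, G.Adj u v → ∃ t : ι, u ∈ β t ∧ v ∈ β t) ∧
    (∀ v : V, (T.induce {t | v ∈ β t}).Connected) ∧
    (∀ t : ι, (β t).ncard ≤ w + 1)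

/-- A graph is 2-connected if it has more than 2 vertices and remains connected
after deleting any single vertex. -/
def TwoConnected {V : Type} (G : SimpleGraph V) : Prop :=
  2 < Nat.card V ∧ ∀ v : V, (G.induce {x | x ≠ v}).Connected

/-- The class of forests. -/
def ForestClass : GraphClass := fun _ G => G.IsAcyclic

/-- Outerplanar graphs: the graphs with no topological minor isomorphic to `K₄`
or `K_{2,3}`. -/
def Outerplanar {V : Type} (G : SimpleGraph V) : Prop :=
  ¬ IsTopMinor K4 G ∧ ¬ IsTopMinor K23 G

/-- The class of outerplanar graphs. -/
def OuterplanarClass : GraphClass := fun _ G => Outerplanar G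

/-- The graph of `σ(G,P)`: for the path (walk) `P = v₀v₁⋯v_m`, add new vertices
`u₀,…,u_{m-1}`, where `uᵢ` is adjacent exactly to `vᵢ` and `v_{i+1}`. -/
def sigmaGraph {V : Type} (G : SimpleGraph V) {a b : V} (P : G.Walk a b) :
    SimpleGraph (V ⊕ Fin P.length) :=
  SimpleGraph.fromRel fun x y =>
    (∃ p q : V, x = Sum.inl p ∧ y = Sum.inl q ∧ G.Adj p q) ∨
    (∃ (p : V) (i : Fin P.length), x = Sum.inl p ∧ y = Sum.inr i ∧
      (p = P.getVert i ∨ p = P.getVert (i + 1)))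

/-- The new path `P'` of `σ(G,P)` (from the `j`-th vertex of `P` on). -/
noncomputable def sigmaWalk {V : Type} (G : SimpleGraph V) {a b : V} (P : G.Walk a b)
    (j : ℕ) (h : j ≤ P.length) :
    (sigmaGraph G P).Walk (Sum.inl (P.getVert j)) (Sum.inl b) :=
  if hj : j = P.length then
    SimpleGraph.Walk.nil.copy (by rw [hj, SimpleGraph.Walk.getVert_length]) rfl
  else by
    have hlt : j < P.length := lt_of_le_of_ne h hj
    have adj1 : (sigmaGraph G P).Adj (Sum.inl (P.getVert j)) (Sum.inr ⟨j, hlt⟩) :=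
      ⟨by simp, Or.inl (Or.inr ⟨P.getVert j, ⟨j, hlt⟩, rfl, rfl, Or.inl rfl⟩)⟩
    have adj2 : (sigmaGraph G P).Adj (Sum.inr ⟨j, hlt⟩) (Sum.inl (P.getVert (j + 1))) :=
      ⟨by simp, Or.inr (Or.inr ⟨P.getVert (j + 1), ⟨j, hlt⟩, rfl, rfl, Or.inr rfl⟩)⟩
    exact SimpleGraph.Walk.cons adj1 (SimpleGraph.Walk.cons adj2 (sigmaWalk G P (j + 1) hlt))
  termination_by P.length - j
  decreasing_by omega

/-- A hemmed graph: a graph together with a walk in it. -/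
structure HGraph where
  V : Type
  G : SimpleGraph V
  a : V
  b : V
  P : G.Walk a b

/-- The operation `σ` on hemmed graphs. -/
noncomputable def HGraph.step (X : HGraph) : HGraph :=
  ⟨X.V ⊕ Fin X.P.length, sigmaGraph X.G X.P, Sum.inl X.a, Sum.inl X.b,
    (sigmaWalk X.G X.P 0 (Nat.zero_le _)).copy
      (by rw [SimpleGraph.Walk.getVert_zero]) rfl⟩

/-- Adding to `G` a new (apex) vertex adjacent exactly to the vertices in `X`. -/
def AddApex {V : Type} (G : SimpleGraph V) (X : Set V) : SimpleGraph (V ⊕ Unit) :=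
  SimpleGraph.fromRel fun x y =>
    (∃ p q : V, x = Sum.inl p ∧ y = Sum.inl q ∧ G.Adj p q) ∨
    (∃ p : V, x = Sum.inl p ∧ y = Sum.inr () ∧ p ∈ X)

/-- A hemmed graph `(G,P)` is outerplanar: `G` has an outerplanar drawing with `P`
on the boundary of the outer face; equivalently, the graph obtained by adding a new
vertex adjacent to all vertices of `P` is outerplanar. -/
def HemmedOuterplanar {V : Type} (G : SimpleGraph V) {a b : V} (P : G.Walk a b) : Prop :=
  Outerplanar (AddApex G {v | v ∈ P.support})


/-!
A graph has `K₃` as a topological minor exactly when it has a cycle: subdividing an edge neither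
creates nor destroys cycles, and a cycle of length `n` is `K₃` subdivided `n - 3` times. Fix a
cycle `C` of the trap `J`. Minimality then forces, in turn:
* `S ⊆ V(C)`, since `C ∪ (J - S)` is already a snare;
* `|S| ≤ 1`: if `v ≠ s` both lie in `S`, the two neighbours of `s` on `C` lie outside `S` and are
  joined in `J - S`, so `J - v` still has a cycle and is a smaller snare;
* `J = C`, since a cycle minus at most one vertex is connected, so `C` itself is a snare;
* `C` is a triangle: on a longer cycle, suppressing a vertex outside `S` leaves a shorter cycle,
  which is again a snare.
-/

open Walk

section

variable {V W : Type}

section Subdivision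

variable {G : SimpleGraph V} {u v : V}

@[simp] lemma subdivideEdge_adj_inl_inl {a b : V} :
    (subdivideEdge G u v).Adj (.inl a) (.inl b) ↔ G.Adj a b ∧ s(a, b) ≠ s(u, v) := by
  simp only [subdivideEdge, fromRel_adj, ne_eq, Sum.inl.injEq, reduceCtorEq, false_and, and_false,
    exists_false, or_false, exists_and_left, exists_eq_left', Sym2.eq_swap (a := b)]
  exact ⟨fun ⟨_, h⟩ => h.elim id fun h => ⟨h.1.symm, h.2⟩, fun h => ⟨h.1.ne, .inl h⟩⟩

@[simp] lemma subdivideEdge_adj_inl_inr {a : V} {t : Unit} :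
    (subdivideEdge G u v).Adj (.inl a) (.inr t) ↔ a = u ∨ a = v := by
  simp [subdivideEdge]

@[simp] lemma subdivideEdge_adj_inr_inl {a : V} {t : Unit} :
    (subdivideEdge G u v).Adj (.inr t) (.inl a) ↔ a = u ∨ a = v := by
  simp [subdivideEdge]

@[simp] lemma subdivideEdge_not_adj_inr_inr {t t' : Unit} :
    ¬ (subdivideEdge G u v).Adj (.inr t) (.inr t') := by
  simp [subdivideEdge]

def SimpleGraph.Iso.subdivideEdge {G' : SimpleGraph W} (e : G ≃g G') (u v : V) :
    subdivideEdge G u v ≃g subdivideEdge G' (e u) (e v) where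
  toEquiv := e.toEquiv.sumCongr (Equiv.refl Unit)
  map_rel_iff' := by
    rintro (a | a) (b | b) <;> simp [e.map_adj_iff]

lemma SimpleGraph.Reachable.of_forall_adj {H : SimpleGraph W} (f : V → W)
    (hf : ∀ ⦃x y⦄, G.Adj x y → H.Reachable (f x) (f y)) {a b : V} (h : G.Reachable a b) :
    H.Reachable (f a) (f b) := by
  rw [reachable_iff_reflTransGen] at h ⊢
  exact h.lift' f fun x y hxy => (reachable_iff_reflTransGen _ _).1 (hf hxy)

/- Every edge `ab` of `G` stays a bridge: a detour from `a` to `b` in `G - ab` lifts to the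
subdivision, through the new vertex wherever it uses `uv`. When `ab = uv`, the bridge of the
subdivision to look at is the edge from `a` to the new vertex. -/
lemma SimpleGraph.IsAcyclic.of_subdivideEdge (h : (subdivideEdge G u v).IsAcyclic) :
    G.IsAcyclic := by
  rw [isAcyclic_iff_forall_adj_isBridge] at h ⊢
  intro a b hab
  rw [isBridge_iff]
  intro hr
  by_cases he : s(a, b) = s(u, v)
  · have hends : ∀ x, x = a ∨ x = b → x = u ∨ x = v := by
      rintro x (rfl | rfl) <;> aesop
    apply isBridge_iff.1 (h (subdivideEdge_adj_inl_inr (t := ()) |>.2 (hends a (.inl rfl))))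
    refine (hr.of_forall_adj Sum.inl fun x y hxy => ?_).trans (Adj.reachable ?_)
    · rw [deleteEdges_adj, Set.mem_singleton_iff, he] at hxy
      exact Adj.reachable ((deleteEdges_adj ..).2 ⟨subdivideEdge_adj_inl_inl.2 hxy, by simp⟩)
    · simp [hends b (.inr rfl), hab.ne.symm]
  · apply isBridge_iff.1 (h (subdivideEdge_adj_inl_inl.2 ⟨hab, he⟩))
    refine hr.of_forall_adj Sum.inl fun x y hxy => ?_
    rw [deleteEdges_adj, Set.mem_singleton_iff] at hxy
    by_cases hxy' : s(x, y) = s(u, v)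
    · have hx : x = u ∨ x = v := by aesop
      have hy : y = u ∨ y = v := by aesop
      exact (Adj.reachable (v := .inr ()) (by simpa using hx)).trans
        (Adj.reachable (by simpa using hy))
    · refine Adj.reachable ((deleteEdges_adj ..).2 ⟨subdivideEdge_adj_inl_inl.2 ⟨hxy.1, hxy'⟩, ?_⟩)
      simpa [Sym2.eq_iff] using hxy.2

end Subdivision

namespace IsSubdivision

lemma of_iso_right {X Y : FGraph} (h : IsSubdivision X Y) {H : SimpleGraph W} (e : Y.2 ≃g H) :
    IsSubdivision X ⟨W, H⟩ := by
  induction h with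
  | of_iso G G' e' => exact .of_iso _ _ ⟨e'.some.trans e⟩
  | step G huv Y _ ih => exact .step G huv _ (ih e)

lemma subdivideEdge {X Y : FGraph} (h : IsSubdivision X Y) {u v : Y.1} (huv : Y.2.Adj u v) :
    IsSubdivision X ⟨Y.1 ⊕ Unit, _root_.subdivideEdge Y.2 u v⟩ := by
  induction h with
  | of_iso G G' e =>
    obtain ⟨e⟩ := e
    refine .step G (e.symm.map_adj_iff.2 huv) _ (.of_iso _ _ ⟨?_⟩)
    simpa using e.subdivideEdge (e.symm u) (e.symm v)
  | step G huv' Y _ ih => exact .step G huv' _ (ih huv)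

lemma not_isAcyclic {X Y : FGraph} (h : IsSubdivision X Y) (hX : ¬ X.2.IsAcyclic) :
    ¬ Y.2.IsAcyclic := by
  induction h with
  | of_iso G H e => exact fun hH => hX (e.some.isAcyclic_iff.2 hH)
  | step G _ H _ ih => exact ih (mt IsAcyclic.of_subdivideEdge hX)

end IsSubdivision

lemma SimpleGraph.cycleGraph_adj_iff_val {n : ℕ} {a b : Fin (n + 2)} :
    (cycleGraph (n + 2)).Adj a b ↔
      a.val + 1 = b.val ∨ b.val + 1 = a.val ∨ (a.val = 0 ∧ b.val = n + 1) ∨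
        (b.val = 0 ∧ a.val = n + 1) := by
  rw [cycleGraph_adj']
  rcases lt_trichotomy a b with h | rfl | h
  · rw [Fin.coe_sub_iff_lt.2 h, Fin.coe_sub_iff_le.2 h.le]
    have := Fin.lt_def.1 h
    omega
  · simp only [sub_self, Fin.val_zero]
    omega
  · rw [Fin.coe_sub_iff_lt.2 h, Fin.coe_sub_iff_le.2 h.le]
    have := Fin.lt_def.1 h
    omega

/-- The new vertex becomes vertex `m + 3`, between `m + 2` and `0`. -/
def subdivideEdgeCycleGraphIso (m : ℕ) :
    subdivideEdge (cycleGraph (m + 3)) (Fin.last (m + 2)) 0 ≃g cycleGraph (m + 4) where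
  toEquiv := (Equiv.sumCongr (Equiv.refl _) (Equiv.ofUnique Unit (Fin 1))).trans finSumFinEquiv
  map_rel_iff' := by
    rintro (⟨a, ha⟩ | a) (⟨b, hb⟩ | b)
    all_goals
      simp only [Equiv.trans_apply, Equiv.sumCongr_apply, Sum.map_inl, Sum.map_inr,
        finSumFinEquiv_apply_left, finSumFinEquiv_apply_right, cycleGraph_adj_iff_val,
        subdivideEdge_adj_inl_inl, subdivideEdge_adj_inl_inr, subdivideEdge_adj_inr_inl,
        subdivideEdge_not_adj_inr_inr, ne_eq, Sym2.eq_iff, Fin.ext_iff, Equiv.refl_apply,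
        Fin.val_castAdd, Fin.val_natAdd, Fin.val_eq_zero, Fin.val_last, Fin.val_zero, and_true,
        iff_false]
      omega

lemma isSubdivision_K3_cycleGraph (m : ℕ) :
    IsSubdivision ⟨Fin 3, K3⟩ ⟨Fin (m + 3), cycleGraph (m + 3)⟩ := by
  induction m with
  | zero => exact .of_iso _ _ ⟨by rw [cycleGraph_three_eq_top]; exact .refl⟩
  | succ m ih =>
    exact (ih.subdivideEdge (u := Fin.last (m + 2)) (v := 0)
      (by simp [cycleGraph_adj_iff_val])).of_iso_right (subdivideEdgeCycleGraphIso m)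

lemma not_isAcyclic_K3 : ¬ K3.IsAcyclic := fun h =>
  isAcyclic_iff_free_cycleGraph.1 h 3 le_rfl (by rw [cycleGraph_three_eq_top]; exact .rfl)

lemma exists_cycleGraph_isContained_of_not_isAcyclic {G : SimpleGraph V} (hG : ¬ G.IsAcyclic) :
    ∃ n ≥ 3, cycleGraph n ⊑ G := by
  simpa [isAcyclic_iff_free_cycleGraph] using hG

theorem isTopMinor_K3_iff {G : SimpleGraph V} : IsTopMinor K3 G ↔ ¬ G.IsAcyclic := by
  constructor
  · rintro ⟨G', hG'⟩ hG
    exact hG'.not_isAcyclic not_isAcyclic_K3 (hG.subgraph G')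
  · intro hG
    obtain ⟨n, hn, hcont⟩ := exists_cycleGraph_isContained_of_not_isAcyclic hG
    obtain ⟨G', ⟨e⟩⟩ := isContained_iff_exists_iso_subgraph.1 hcont
    obtain ⟨m, rfl⟩ : ∃ m, n = m + 3 := ⟨n - 3, by omega⟩
    exact ⟨G', (isSubdivision_K3_cycleGraph m).of_iso_right e⟩

lemma three_le_card_of_not_isAcyclic [Fintype V] {G : SimpleGraph V} (hG : ¬ G.IsAcyclic) :
    3 ≤ Fintype.card V := by
  obtain ⟨n, hn, ⟨f⟩⟩ := exists_cycleGraph_isContained_of_not_isAcyclic hG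
  exact hn.trans (by simpa using Fintype.card_le_of_injective f f.injective)

lemma nonempty_iso_K3_of_card_eq_three [Fintype V] {G : SimpleGraph V}
    (hV : Fintype.card V = 3) (hG : ¬ G.IsAcyclic) : Nonempty (G ≃g K3) := by
  obtain ⟨n, hn, ⟨f⟩⟩ := exists_cycleGraph_isContained_of_not_isAcyclic hG
  obtain rfl : n = 3 :=
    le_antisymm (by simpa [hV] using Fintype.card_le_of_injective f f.injective) hn
  rw [cycleGraph_three_eq_top] at f
  have hf : Function.Bijective f :=
    (Fintype.bijective_iff_injective_and_card f).2 ⟨f.injective, by simp [hV]⟩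
  exact ⟨RelIso.symm ⟨Equiv.ofBijective f hf, fun {i j} =>
    ⟨fun hij => (top_adj i j).2 fun h => hij.ne (by simp [h]), f.toHom.map_adj⟩⟩⟩

namespace SimpleGraph

variable {G : SimpleGraph V} {a : V}

lemma not_isAcyclic_of_adj_of_reachable_induce {U : Set V} {s p q : V} (hs : s ∉ U)
    (hp : G.Adj s p) (hq : G.Adj s q) (hpq : p ≠ q) (hpU : p ∈ U) (hqU : q ∈ U)
    (hr : (G.induce U).Reachable ⟨q, hqU⟩ ⟨p, hpU⟩) : ¬ G.IsAcyclic := by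
  rw [isAcyclic_iff_forall_adj_isBridge]
  intro hG
  refine isBridge_iff.1 (hG hp)
    ((Adj.reachable ?_).trans (hr.map ⟨Subtype.val, fun {x y} hxy => ?_⟩))
  · exact (deleteEdges_adj ..).2 ⟨hq, by simp [hpq.symm, hq.ne']⟩
  · refine (deleteEdges_adj ..).2 ⟨hxy, fun h => ?_⟩
    rcases Sym2.eq_iff.1 h with ⟨h, -⟩ | ⟨-, h⟩
    · exact hs (h ▸ x.2)
    · exact hs (h ▸ y.2)

lemma Walk.length_induce (s : Set V) {u v : V} (p : G.Walk u v) (hp : ∀ x ∈ p.support, x ∈ s) :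
    (p.induce s hp).length = p.length := by
  induction p <;> simp [*]

lemma Walk.isPath_tail_cons {u v w : V} (h : G.Adj u v) (p : G.Walk v w) :
    (cons h p).tail.IsPath ↔ p.IsPath := by
  cases p <;> rfl

lemma Walk.IsCycle.mapToSubgraph {c : G.Walk a a} (hc : c.IsCycle) : c.mapToSubgraph.IsCycle :=
  IsCycle.of_map (f := c.toSubgraph.hom) (by rwa [map_mapToSubgraph_hom])

lemma Walk.IsCycle.not_isAcyclic_coe {c : G.Walk a a} (hc : c.IsCycle) {H : G.Subgraph}
    (hle : c.toSubgraph ≤ H) : ¬ H.coe.IsAcyclic := fun hH =>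
  hH _ (hc.mapToSubgraph.map (Subgraph.inclusion.injective hle))

variable [DecidableEq V]

lemma Walk.IsCycle.isHamiltonianCycle_of_forall_mem {c : G.Walk a a} (hc : c.IsCycle)
    (h : ∀ v, v ∈ c.support) : c.IsHamiltonianCycle := by
  refine ⟨hc, hc.isPath_tail.isHamiltonian_of_mem fun v => ?_⟩
  rw [support_tail_of_not_nil _ hc.not_nil]
  rcases (mem_support_iff c).1 (h v) with rfl | hv
  · exact end_mem_tail_support hc.not_nil
  · exact hv

lemma Walk.IsCycle.isHamiltonianCycle_mapToSubgraph {c : G.Walk a a} (hc : c.IsCycle) :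
    c.mapToSubgraph.IsHamiltonianCycle := by
  refine hc.mapToSubgraph.isHamiltonianCycle_of_forall_mem fun ⟨t, ht⟩ => ?_
  have : t ∈ (c.mapToSubgraph.map c.toSubgraph.hom).support := by
    rw [map_mapToSubgraph_hom]
    exact c.mem_verts_toSubgraph.1 ht
  obtain ⟨t', ht', rfl⟩ := List.mem_map.1 (support_map _ _ ▸ this)
  exact ht'

lemma Walk.IsHamiltonianCycle.exists_isPath_compl {c : G.Walk a a} (hc : c.IsHamiltonianCycle)
    (v : V) : ∃ (x y : V) (q : G.Walk x y), q.IsPath ∧ G.Adj v x ∧ G.Adj y v ∧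
      (∀ t, t ∈ q.support ↔ t ≠ v) ∧ q.length + 2 = c.length := by
  obtain ⟨c', hc', hlen⟩ : ∃ c' : G.Walk v v, c'.IsHamiltonianCycle ∧ c'.length = c.length :=
    ⟨_, hc.rotate (hc.mem_support v), length_rotate ..⟩
  cases c' with
  | nil => exact absurd hc'.isCycle (by simp)
  | cons hvx p =>
    have hp : p.IsPath := ((cons_isCycle_iff p hvx).1 hc'.isCycle).1
    have hpnil : ¬ p.Nil := fun hnil => by
      have := hc'.isCycle.three_le_length
      simp [length_eq_zero_iff.2 hnil] at this
    have hsupp : p.support = p.dropLast.support ++ [v] := by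
      conv_lhs => rw [← concat_dropLast (p.adj_penultimate hpnil)]
      rw [support_concat]
    have hv : v ∉ p.dropLast.support := by
      have := hp.support_nodup
      rw [hsupp, List.nodup_append] at this
      exact fun h => this.2.2 _ h _ (List.mem_singleton_self v) rfl
    refine ⟨_, _, p.dropLast, hp.dropLast, hvx, p.adj_penultimate hpnil,
      fun t => ⟨?_, fun ht => ?_⟩, ?_⟩
    · rintro h rfl
      exact hv h
    · have := hc'.mem_support t
      rw [support_cons, List.mem_cons, hsupp, List.mem_append] at this
      simpa [ht] using this
    · rw [← hlen, length_cons, ← length_dropLast_add_one hpnil]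

lemma Walk.IsHamiltonianCycle.connected_induce {c : G.Walk a a} (hc : c.IsHamiltonianCycle)
    {U : Set V} (hU : Uᶜ.Subsingleton) : (G.induce U).Connected := by
  obtain ⟨v, hv⟩ : ∃ v, Uᶜ ⊆ {v} := hU.eq_empty_or_singleton.elim
    (fun h => ⟨a, by simp [h]⟩) fun ⟨v, h⟩ => ⟨v, h.le⟩
  have hU : ∀ t, t ≠ v → t ∈ U := fun t ht => by_contra fun h => ht (hv h)
  obtain ⟨x, y, q, -, hvx, -, hq, -⟩ := hc.exists_isPath_compl v
  have hx : x ∈ U := hU x hvx.ne'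
  refine (connected_iff_exists_forall_reachable _).2 ⟨⟨x, hx⟩, fun ⟨t, ht⟩ => ?_⟩
  by_cases htv : t = v
  · subst htv
    exact Adj.reachable (induce_adj.2 hvx.symm)
  · have htq := (hq t).2 htv
    exact ((q.takeUntil t htq).induce U fun s hs =>
      hU s ((hq s).1 (q.support_takeUntil_subset_support htq hs))).reachable

lemma Walk.IsHamiltonianCycle.isSnare_K3 {c : G.Walk a a} (hc : c.IsHamiltonianCycle)
    {S : Set V} (hS : S.Subsingleton) : IsSnare K3 G S :=
  ⟨isTopMinor_K3_iff.2 fun hG => hG c hc.isCycle, fun x hx y hy hxy => hxy.ne (hS hx hy),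
    hc.connected_induce (by rwa [compl_compl])⟩

lemma Walk.IsHamiltonianCycle.exists_isHamiltonianCycle_suppress {c : G.Walk a a}
    (hc : c.IsHamiltonianCycle) (hlen : 4 ≤ c.length) (w : V) :
    ∃ (b : ↥({w}ᶜ : Set V)) (c' : (suppress G w).Walk b b), c'.IsHamiltonianCycle := by
  obtain ⟨x, y, q, hq, hwx, hyw, hsupp, hqlen⟩ := hc.exists_isPath_compl w
  have hle : G.induce {w}ᶜ ≤ suppress G w := fun s t hst => by
    simp only [suppress, fromRel_adj]
    exact ⟨hst.ne, .inl (.inl hst)⟩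
  have hqw : ∀ t ∈ q.support, t ∈ ({w}ᶜ : Set V) := fun t ht => (hsupp t).1 ht
  have hQ : (q.induce _ hqw).IsPath :=
    IsPath.of_map (f := (Embedding.induce _).toHom) (by rwa [map_induce])
  have hxy : x ≠ y := by
    rintro rfl
    rw [length_eq_zero_iff.2 (isPath_iff_nil.1 hq)] at hqlen
    omega
  have hclose : (suppress G w).Adj ⟨y, hqw y q.end_mem_support⟩ ⟨x, hqw x q.start_mem_support⟩ := by
    simp [suppress, fromRel_adj, hxy.symm, hyw, hwx]
  refine ⟨_, cons hclose ((q.induce _ hqw).mapLe hle),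
    IsCycle.isHamiltonianCycle_of_forall_mem ?_ ?_⟩
  · rw [isCycle_iff_isPath_tail_and_le_length, isPath_tail_cons, length_cons, length_mapLe,
      length_induce]
    exact ⟨hQ.mapLe hle, by omega⟩
  · rintro ⟨t, ht⟩
    simp only [support_cons, List.mem_cons, support_mapLe_eq_support, support_induce,
      List.mem_attachWith]
    exact .inr ((hsupp t).2 ht)

end SimpleGraph

variable {J : SimpleGraph V} {S : Set V}

lemma connected_coe_induce_compl_of_le (hS : (J.induce Sᶜ).Connected) {J' : J.Subgraph}
    (hle : (⊤ : J.Subgraph).induce Sᶜ ≤ J') :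
    (J'.coe.induce {x : J'.verts | ↑x ∈ S}ᶜ).Connected := by
  let f : J.induce Sᶜ →g J'.coe.induce {x : J'.verts | ↑x ∈ S}ᶜ :=
    ⟨fun x => ⟨⟨x, hle.1 x.2⟩, x.2⟩, fun {x y} hxy => hle.2 ⟨x.2, y.2, hxy⟩⟩
  refine hS.map f ?_
  rintro ⟨⟨x, hx⟩, hxS⟩
  exact ⟨⟨x, hxS⟩, rfl⟩

lemma IsSnare.of_subgraph {H : SimpleGraph W} (h : IsSnare H J S) {J' : J.Subgraph}
    (hH : IsTopMinor H J'.coe) (hle : (⊤ : J.Subgraph).induce Sᶜ ≤ J') :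
    IsSnare H J'.coe {x | ↑x ∈ S} :=
  ⟨hH, fun a ha b hb hab => h.2.1 a ha b hb (J'.adj_sub hab),
    connected_coe_induce_compl_of_le h.2.2 hle⟩

namespace IsTrap

lemma exists_isCycle (h : IsTrap K3 J S) : ∃ (a : V) (c : J.Walk a a), c.IsCycle := by
  simpa [IsAcyclic] using isTopMinor_K3_iff.1 h.1.1

lemma eq_top_of_le (h : IsTrap K3 J S) {J' : J.Subgraph} (hJ' : ¬ J'.coe.IsAcyclic)
    (hle : (⊤ : J.Subgraph).induce Sᶜ ≤ J') : J' = ⊤ := by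
  by_contra hne
  exact h.2.1 J' hne (h.1.of_subgraph (isTopMinor_K3_iff.2 hJ') hle)

lemma mem_support (h : IsTrap K3 J S) {a : V} {c : J.Walk a a} (hc : c.IsCycle) {s : V}
    (hs : s ∈ S) : s ∈ c.support := by
  have := h.eq_top_of_le (hc.not_isAcyclic_coe le_sup_left) le_sup_right
  have hs' : s ∈ (c.toSubgraph ⊔ (⊤ : J.Subgraph).induce Sᶜ).verts := by rw [this]; trivial
  simpa [hs] using hs'

lemma subsingleton (h : IsTrap K3 J S) : S.Subsingleton := by
  obtain ⟨a, c, hc⟩ := h.exists_isCycle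
  intro v hv s hs
  by_contra hvs
  obtain ⟨p, q, hpq, hN⟩ :=
    Set.ncard_eq_two.1 (hc.ncard_neighborSet_toSubgraph_eq_two (h.mem_support hc hs))
  have hp : J.Adj s p := c.toSubgraph.adj_sub (show p ∈ c.toSubgraph.neighborSet s by simp [hN])
  have hq : J.Adj s q := c.toSubgraph.adj_sub (show q ∈ c.toSubgraph.neighborSet s by simp [hN])
  have hpS : p ∉ S := fun hpS => h.1.2.1 s hs p hpS hp
  have hqS : q ∉ S := fun hqS => h.1.2.1 s hs q hqS hq
  have hpv : p ≠ v := fun h => hpS (h ▸ hv)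
  have hqv : q ≠ v := fun h => hqS (h ▸ hv)
  have hle : (⊤ : J.Subgraph).induce Sᶜ ≤ (⊤ : J.Subgraph).induce {v}ᶜ :=
    Subgraph.induce_mono_right (by simpa using hv)
  have hJ' : ¬ ((⊤ : J.Subgraph).induce {v}ᶜ).coe.IsAcyclic :=
    not_isAcyclic_of_adj_of_reachable_induce
      (U := {x : ((⊤ : J.Subgraph).induce {v}ᶜ).verts | (x : V) ∈ S}ᶜ) (s := ⟨s, Ne.symm hvs⟩)
      (p := ⟨p, hpv⟩) (q := ⟨q, hqv⟩) (fun h => h hs) ⟨Ne.symm hvs, hpv, hp⟩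
      ⟨Ne.symm hvs, hqv, hq⟩ (fun h => hpq (congrArg Subtype.val h)) hpS hqS
      ((connected_coe_induce_compl_of_le h.1.2.2 hle).preconnected _ _)
  have hv' : v ∈ ((⊤ : J.Subgraph).induce {v}ᶜ).verts := by
    rw [h.eq_top_of_le hJ' hle]
    trivial
  exact hv' rfl

lemma toSubgraph_eq_top (h : IsTrap K3 J S) {a : V} {c : J.Walk a a} (hc : c.IsCycle) :
    c.toSubgraph = ⊤ := by
  by_contra hne
  exact h.2.1 _ hne
    (hc.isHamiltonianCycle_mapToSubgraph.isSnare_K3 (h.subsingleton.preimage Subtype.val_injective))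

lemma card_le_three [Fintype V] (h : IsTrap K3 J S) : Fintype.card V ≤ 3 := by
  obtain ⟨a, c, hc⟩ := h.exists_isCycle
  have htop := h.toSubgraph_eq_top hc
  have hmem : ∀ v, v ∈ c.support := fun v => c.mem_verts_toSubgraph.1 (htop ▸ trivial)
  have hH := hc.isHamiltonianCycle_of_forall_mem hmem
  by_contra! hcard
  obtain ⟨w, hw⟩ : ∃ w, w ∉ S := by
    by_contra! hall
    obtain ⟨x, y, hxy⟩ := Fintype.exists_pair_of_one_lt_card (by omega : 1 < Fintype.card V)
    exact hxy (h.subsingleton (hall x) (hall y))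
  have hdeg : (J.neighborSet w).ncard = 2 := by
    simpa [htop] using hc.ncard_neighborSet_toSubgraph_eq_two (hmem w)
  obtain ⟨b, c', hc'⟩ := hH.exists_isHamiltonianCycle_suppress (by rw [hH.length_eq]; omega) w
  exact h.2.2 w hw hdeg (hc'.isSnare_K3 (h.subsingleton.preimage Subtype.val_injective))

end IsTrap

end

/-- Every `K₃`-trap `(J,S)` has `J ≅ K₃` and `|S| ≤ 1`. -/
theorem K3_trap_classification (V : Type) [Fintype V] (J : SimpleGraph V) (S : Set V)
    (h : IsTrap K3 J S) :
    Nonempty (J ≃g K3) ∧ S.ncard ≤ 1 := by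
  have hJ : ¬ J.IsAcyclic := isTopMinor_K3_iff.1 h.1.1
  refine ⟨nonempty_iso_K3_of_card_eq_three ?_ hJ,
    Set.ncard_le_one_iff_subsingleton.2 h.subsingleton⟩
  exact le_antisymm h.card_le_three (three_le_card_of_not_isAcyclic hJ)
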